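/- arXiv:1806.07643 — 2 statements merged into one kernel-verified Lean document; each statement's English description precedes it below -/
import Mathlib

section
/- Let P and Q be polytopes in ℝ^d whose normal fans coincide, i.e., for every vector c, {c' : F_P(c) ⊆ F_P(c')} = {c' : F_Q(c) ⊆ F_Q(c')}. Then P has a summand homothetic to Q: there exist a real α > 0 and a polytope R such that P = α • Q + R. -/
open Pointwise
open scoped RealInnerProductSpace

noncomputable section

abbrev Esp (d : ℕ) := EuclideanSpace ℝ (Fin d)

def IsPolytope {d : ℕ} (P : Set (Esp d)) : Prop :=
  ∃ s : Finset (Esp d), s.Nonempty ∧ P = convexHull ℝ (s : Set (Esp d))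

def polyFace {d : ℕ} (P : Set (Esp d)) (c : Esp d) : Set (Esp d) :=
  {x | x ∈ P ∧ ∀ y ∈ P, ⟪c, x⟫ ≤ ⟪c, y⟫}

def polyVerts {d : ℕ} (P : Set (Esp d)) : Set (Esp d) :=
  Set.extremePoints ℝ P

def f0 {d : ℕ} (P : Set (Esp d)) : ℕ := (polyVerts P).ncard

def polyAdj {d : ℕ} (P : Set (Esp d)) (u v : Esp d) : Prop :=
  u ≠ v ∧ u ∈ polyVerts P ∧ v ∈ polyVerts P ∧
    ∃ c : Esp d, polyFace P c = segment ℝ u v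

def polyGraph {d : ℕ} (P : Set (Esp d)) : SimpleGraph (Esp d) where
  Adj u v := polyAdj P u v
  symm := ⟨by
    rintro u v ⟨hne, hu, hv, c, hc⟩
    exact ⟨hne.symm, hv, hu, c, by rw [hc, segment_symm]⟩⟩
  loopless := ⟨by rintro u ⟨hne, -⟩; exact hne rfl⟩

def polyDiam {d : ℕ} (P : Set (Esp d)) : ℕ :=
  sSup {n : ℕ | ∃ u ∈ polyVerts P, ∃ v ∈ polyVerts P, n = (polyGraph P).dist u v}

def polyDim {d : ℕ} (P : Set (Esp d)) : ℕ :=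
  Module.finrank ℝ (affineSpan ℝ P).direction

def IsFace {d : ℕ} (P F : Set (Esp d)) : Prop := ∃ c : Esp d, polyFace P c = F

def gammaVerts {d : ℕ} (P Q : Set (Esp d)) (u : Esp d) : Set (Esp d) :=
  {w ∈ polyVerts (P + Q) | ∃ v ∈ polyVerts Q, w = u + v}

/-!
For `P = conv s` and a direction `c`, let `p c` be the centroid of the points of `s` on the face
`F_P(c)`. It lies in the relative interior of that face, so `p c₀ ∈ F_P(c)` forces
`F_P(c₀) ⊆ F_P(c)`, hence `F_Q(c₀) ⊆ F_Q(c)` and `q c₀ ∈ F_Q(c)` for the analogous centroid `q`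
of `Q`. Farkas' lemma turns this implication into a bound
`⟪c, q c₀ - q c⟫ ≤ M * ⟪c, p c₀ - p c⟫` for all `c`. As `p` and `q` take finitely many values,
one `ε > 0` works for every `c₀`: `p c - ε • q c` minimises `⟪c, ·⟫` over all the points
`p c₀ - ε • q c₀`. With `R` their convex hull, `P` and `ε • Q + R` have the same support
function, hence are equal.
-/

open Set

namespace PointedCone

section Algebra

variable {E : Type*} [AddCommGroup E] [Module ℝ E]

lemma mem_hull_finset_iff {S : Finset E} {x : E} :
    x ∈ hull ℝ (S : Set E) ↔ ∃ f : E → ℝ, (∀ a ∈ S, 0 ≤ f a) ∧ ∑ a ∈ S, f a • a = x := by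
  rw [Submodule.mem_span_finset]
  constructor
  · rintro ⟨f, -, rfl⟩
    exact ⟨fun a => f a, fun a _ => (f a).2, rfl⟩
  · rintro ⟨f, hf, rfl⟩
    classical
    refine ⟨fun a => if ha : a ∈ S then ⟨f a, hf a ha⟩ else 0,
      Function.support_subset_iff'.2 fun a ha => dif_neg ha, ?_⟩
    exact Finset.sum_congr rfl fun a ha => by simp [ha, Nonneg.mk_smul]

lemma mem_hull_finset_iff' {S : Finset E} {x : E} :
    x ∈ hull ℝ (S : Set E) ↔ ∃ f : S → ℝ, 0 ≤ f ∧ ∑ a, f a • (a : E) = x := by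
  rw [Submodule.mem_span_finset']
  constructor
  · rintro ⟨f, rfl⟩
    exact ⟨fun a => f a, fun a => (f a).2, rfl⟩
  · rintro ⟨f, hf, rfl⟩
    exact ⟨fun a => ⟨f a, hf a⟩, rfl⟩

lemma exists_mem_hull_erase [DecidableEq E] {S : Finset E} (hS : ¬LinearIndepOn ℝ id (S : Set E))
    {x : E} (hx : x ∈ hull ℝ (S : Set E)) : ∃ a ∈ S, x ∈ hull ℝ (S.erase a : Set E) := by
  obtain ⟨f, hf, rfl⟩ := mem_hull_finset_iff.1 hx
  obtain ⟨g, hg, hgpos⟩ : ∃ g : E → ℝ, ∑ a ∈ S, g a • a = 0 ∧ ∃ a ∈ S, 0 < g a := by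
    obtain ⟨g, hg, a, ha, hga⟩ := not_linearIndepOn_finset_iff.1 hS
    rcases hga.lt_or_gt with hneg | hpos
    · exact ⟨-g, by simpa [neg_smul] using hg, a, ha, by simpa⟩
    · exact ⟨g, by simpa using hg, a, ha, hpos⟩
  -- Subtract from `f` the largest multiple of the relation `g` that keeps it nonnegative.
  obtain ⟨a₀, ha₀, hmin⟩ := {a ∈ S | 0 < g a}.exists_min_image (fun a => f a / g a)
    (Finset.filter_nonempty_iff.2 hgpos)
  rw [Finset.mem_filter] at ha₀
  have hr : 0 ≤ f a₀ / g a₀ := div_nonneg (hf a₀ ha₀.1) ha₀.2.le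
  set k : E → ℝ := fun a => f a - f a₀ / g a₀ * g a
  have hk₀ : k a₀ = 0 := by simp [k, ha₀.2.ne']
  refine ⟨a₀, ha₀.1, mem_hull_finset_iff.2 ⟨k, fun a ha => ?_, ?_⟩⟩
  · have haS := Finset.mem_of_mem_erase ha
    simp only [k, sub_nonneg]
    rcases le_or_gt (g a) 0 with hga | hga
    · exact (mul_nonpos_of_nonneg_of_nonpos hr hga).trans (hf a haS)
    · exact (le_div_iff₀ hga).1 (hmin a (Finset.mem_filter.2 ⟨haS, hga⟩))
  · rw [Finset.sum_erase _ (by rw [hk₀, zero_smul])]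
    simp only [k, sub_smul, mul_smul, Finset.sum_sub_distrib, ← Finset.smul_sum, hg, smul_zero,
      sub_zero]

lemma exists_linearIndepOn_of_mem_hull {S : Finset E} {x : E} (hx : x ∈ hull ℝ (S : Set E)) :
    ∃ T ⊆ S, LinearIndepOn ℝ id (T : Set E) ∧ x ∈ hull ℝ (T : Set E) := by
  classical
  induction S using Finset.strongInduction with
  | H S ih =>
    by_cases hS : LinearIndepOn ℝ id (S : Set E)
    · exact ⟨S, subset_rfl, hS, hx⟩
    · obtain ⟨a, ha, hxa⟩ := exists_mem_hull_erase hS hx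
      obtain ⟨T, hTS, hT, hxT⟩ := ih _ (Finset.erase_ssubset ha) hxa
      exact ⟨T, hTS.trans (Finset.erase_subset a S), hT, hxT⟩

end Algebra

section Topology

variable {E : Type*} [NormedAddCommGroup E] [NormedSpace ℝ E]

lemma isClosed_hull_of_linearIndepOn {T : Finset E} (hT : LinearIndepOn ℝ id (T : Set E)) :
    IsClosed (hull ℝ (T : Set E) : Set E) := by
  let L := Fintype.linearCombination ℝ ((↑) : T → E)
  have hL : Topology.IsClosedEmbedding L :=
    LinearMap.isClosedEmbedding_of_injective <|
      LinearMap.ker_eq_bot.2 hT.fintypeLinearCombination_injective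
  have : (hull ℝ (T : Set E) : Set E) = L '' Ici 0 := by
    ext x
    simp [mem_hull_finset_iff', L, Fintype.linearCombination_apply]
  rw [this]
  exact hL.isClosedMap _ isClosed_Ici

lemma isClosed_hull_finset (S : Finset E) : IsClosed (hull ℝ (S : Set E) : Set E) := by
  classical
  set I := S.powerset.filter fun T : Finset E => LinearIndepOn ℝ id (T : Set E)
  have : (hull ℝ (S : Set E) : Set E) = ⋃ T ∈ I, (hull ℝ (T : Set E) : Set E) := by
    refine Subset.antisymm (fun x hx => ?_) (iUnion₂_subset fun T hT => ?_)
    · obtain ⟨T, hTS, hT, hxT⟩ := exists_linearIndepOn_of_mem_hull hx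
      exact mem_iUnion₂.2 ⟨T, Finset.mem_filter.2 ⟨Finset.mem_powerset.2 hTS, hT⟩, hxT⟩
    · rw [Finset.mem_filter, Finset.mem_powerset] at hT
      exact Submodule.span_mono (Finset.coe_subset.2 hT.1)
  rw [this]
  refine isClosed_biUnion_finset fun T hT => ?_
  rw [Finset.mem_filter] at hT
  exact isClosed_hull_of_linearIndepOn hT.2

end Topology

section InnerProduct

variable {E : Type*} [NormedAddCommGroup E] [InnerProductSpace ℝ E]

lemma exists_mul_le_inner_of_mem_hull {S : Finset E} {b : E} (hb : b ∈ hull ℝ (S : Set E)) :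
    ∃ M : ℝ, ∀ y m, (∀ a ∈ S, m ≤ ⟪y, a⟫) → M * m ≤ ⟪y, b⟫ := by
  obtain ⟨f, hf, rfl⟩ := mem_hull_finset_iff.1 hb
  refine ⟨∑ a ∈ S, f a, fun y m hm => ?_⟩
  rw [inner_sum, Finset.sum_mul]
  exact Finset.sum_le_sum fun a ha => by
    rw [real_inner_smul_right]; exact mul_le_mul_of_nonneg_left (hm a ha) (hf a ha)

theorem mem_hull_of_forall_inner_nonneg [CompleteSpace E] {S : Finset E} {b : E}
    (h : ∀ y, (∀ a ∈ S, 0 ≤ ⟪y, a⟫) → 0 ≤ ⟪y, b⟫) : b ∈ hull ℝ (S : Set E) := by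
  by_contra hb
  obtain ⟨y, hy, hby⟩ :=
    ProperCone.hyperplane_separation' ⟨hull ℝ (S : Set E), isClosed_hull_finset S⟩ hb
  rw [real_inner_comm] at hby
  exact hby.not_ge (h y fun a ha => real_inner_comm a y ▸ hy a (subset_hull ha))

end InnerProduct

end PointedCone

section InnerProduct

variable {E : Type*} [NormedAddCommGroup E] [InnerProductSpace ℝ E]

lemma subset_of_forall_exists_inner_le [CompleteSpace E] {A B : Set E} (hB : Convex ℝ B)
    (hBc : IsClosed B)
    (h : ∀ c, ∀ x ∈ A, ∃ y ∈ B, ⟪c, y⟫ ≤ ⟪c, x⟫) : A ⊆ B := by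
  intro x hx
  by_contra hxB
  obtain ⟨f, u, hfx, hfB⟩ := geometric_hahn_banach_point_closed hB hBc hxB
  obtain ⟨y, hy, hyx⟩ := h ((InnerProductSpace.toDual ℝ E).symm f) x hx
  rw [InnerProductSpace.toDual_symm_apply, InnerProductSpace.toDual_symm_apply] at hyx
  linarith [hfB y hy]

lemma exists_pos_forall_mul_inner_le {p q : E → E} (hfin : (range fun c => (p c, q c)).Finite)
    (hp : ∀ c₀ c, ⟪c, p c⟫ ≤ ⟪c, p c₀⟫)
    (hbound : ∀ c₀ c₁, ∃ M, ∀ c, ⟪c, q c₀ - q c₁⟫ ≤ M * ⟪c, p c₀ - p c⟫) :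
    ∃ ε > 0, ∀ c₀ c, ε * ⟪c, q c₀ - q c⟫ ≤ ⟪c, p c₀ - p c⟫ := by
  have hev : ∀ c₀ c₁, ∀ᶠ M in Filter.atTop, ∀ c, ⟪c, q c₀ - q c₁⟫ ≤ M * ⟪c, p c₀ - p c⟫ := by
    intro c₀ c₁
    obtain ⟨M, hM⟩ := hbound c₀ c₁
    filter_upwards [Filter.eventually_ge_atTop M] with M' hM' c
    refine (hM c).trans (mul_le_mul_of_nonneg_right hM' ?_)
    rw [inner_sub_right, sub_nonneg]
    exact hp c₀ c
  -- The bound for `(c₀, c₁)` depends only on `(p c₀, q c₀)` and `q c₁`: finitely many cases.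
  have hall : ∀ᶠ M in Filter.atTop, ∀ i ∈ range fun c => (p c, q c),
      ∀ j ∈ range fun c => (p c, q c), ∀ c, ⟪c, i.2 - j.2⟫ ≤ M * ⟪c, i.1 - p c⟫ := by
    refine (Filter.eventually_all_finite hfin).2 ?_
    rintro _ ⟨c₀, rfl⟩
    refine (Filter.eventually_all_finite hfin).2 ?_
    rintro _ ⟨c₁, rfl⟩
    exact hev c₀ c₁
  obtain ⟨M, hM, hMpos⟩ := (hall.and (Filter.eventually_gt_atTop 0)).exists
  refine ⟨M⁻¹, inv_pos.2 hMpos, fun c₀ c => ?_⟩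
  rw [inv_mul_le_iff₀ hMpos]
  exact hM _ ⟨c₀, rfl⟩ _ ⟨c, rfl⟩ c

end InnerProduct

section Faces

variable {d : ℕ}

lemma convex_polyFace {K : Set (Esp d)} (hK : Convex ℝ K) (c : Esp d) :
    Convex ℝ (polyFace K c) := by
  rintro x ⟨hxK, hx⟩ y ⟨hyK, hy⟩ a b ha hb hab
  refine ⟨hK hxK hyK ha hb hab, fun z hz => ?_⟩
  calc ⟪c, a • x + b • y⟫ = a * ⟪c, x⟫ + b * ⟪c, y⟫ := by
        rw [inner_add_right, real_inner_smul_right, real_inner_smul_right]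
    _ ≤ a * ⟪c, z⟫ + b * ⟪c, z⟫ :=
        add_le_add (mul_le_mul_of_nonneg_left (hx z hz) ha) (mul_le_mul_of_nonneg_left (hy z hz) hb)
    _ = ⟪c, z⟫ := by rw [← add_mul, hab, one_mul]

lemma mem_polyFace_convexHull_iff {S : Set (Esp d)} {c x : Esp d} (hx : x ∈ convexHull ℝ S) :
    x ∈ polyFace (convexHull ℝ S) c ↔ ∀ v ∈ S, ⟪c, x⟫ ≤ ⟪c, v⟫ :=
  ⟨fun h v hv => h.2 v (subset_convexHull ℝ S hv),
    fun h => ⟨hx, fun _ hy => convexHull_min h (convex_halfSpace_ge (innerₛₗ ℝ c).isLinear _) hy⟩⟩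

lemma mem_polyFace_of_centerMass_mem {ι : Type*} {K : Set (Esp d)} {V : Finset ι} {w : ι → ℝ}
    {z : ι → Esp d} {c : Esp d} (hw : ∀ i ∈ V, 0 ≤ w i) (hz : ∀ i ∈ V, z i ∈ K)
    (h : V.centerMass w z ∈ polyFace K c) {i : ι} (hi : i ∈ V) (hwi : w i ≠ 0) :
    z i ∈ polyFace K c := by
  set m := ⟪c, V.centerMass w z⟫
  have hle : ∀ j ∈ V, m ≤ ⟪c, z j⟫ := fun j hj => h.2 _ (hz j hj)
  have hsum : ∑ j ∈ V, w j * (⟪c, z j⟫ - m) = 0 := by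
    by_cases hW : ∑ j ∈ V, w j = 0
    · rw [Finset.sum_eq_zero_iff_of_nonneg hw] at hW
      exact Finset.sum_eq_zero fun j hj => by rw [hW j hj, zero_mul]
    · have hm : m = (∑ j ∈ V, w j)⁻¹ * ∑ j ∈ V, w j * ⟪c, z j⟫ := by
        simp only [m, Finset.centerMass, real_inner_smul_right, inner_sum]
      simp only [mul_sub, Finset.sum_sub_distrib, ← Finset.sum_mul, hm, mul_inv_cancel_left₀ hW,
        sub_self]
  have hzero := (Finset.sum_eq_zero_iff_of_nonneg fun j hj =>
    mul_nonneg (hw j hj) (sub_nonneg.2 (hle j hj))).1 hsum i hi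
  have heq : ⟪c, z i⟫ = m := by
    rcases mul_eq_zero.1 hzero with h' | h'
    · exact absurd h' hwi
    · linarith
  exact ⟨hz i hi, fun y hy => heq ▸ h.2 y hy⟩

open Classical in
def faceVerts (s : Finset (Esp d)) (c : Esp d) : Finset (Esp d) :=
  s.filter (· ∈ polyFace (convexHull ℝ (s : Set (Esp d))) c)

def faceCentroid (s : Finset (Esp d)) (c : Esp d) : Esp d :=
  (faceVerts s c).centerMass (fun _ => (1 : ℝ)) id

lemma mem_faceVerts {s : Finset (Esp d)} {c v : Esp d} :
    v ∈ faceVerts s c ↔ v ∈ s ∧ v ∈ polyFace (convexHull ℝ (s : Set (Esp d))) c := by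
  classical exact Finset.mem_filter

lemma polyFace_convexHull_eq (s : Finset (Esp d)) (c : Esp d) :
    polyFace (convexHull ℝ (s : Set (Esp d))) c = convexHull ℝ (faceVerts s c : Set (Esp d)) := by
  refine Subset.antisymm (fun x hx => ?_)
    (convexHull_min (fun v hv => (mem_faceVerts.1 hv).2)
      (convex_polyFace (convex_convexHull ℝ _) c))
  obtain ⟨w, hw0, hw1, rfl⟩ := Finset.mem_convexHull.1 hx.1
  rw [← Finset.centerMass_filter_ne_zero]
  refine Finset.centerMass_mem_convexHull _ (fun v hv => hw0 v (Finset.mem_filter.1 hv).1)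
    (by rw [Finset.sum_filter_ne_zero, hw1]; exact one_pos) fun v hv => ?_
  rw [Finset.mem_filter] at hv
  exact mem_faceVerts.2 ⟨hv.1, mem_polyFace_of_centerMass_mem hw0
    (fun v hv => subset_convexHull ℝ _ hv) hx hv.1 hv.2⟩

lemma faceVerts_nonempty {s : Finset (Esp d)} (hs : s.Nonempty) (c : Esp d) :
    (faceVerts s c).Nonempty := by
  obtain ⟨v, hv, hmin⟩ := s.exists_min_image (fun v => ⟪c, v⟫) hs
  exact ⟨v, mem_faceVerts.2 ⟨hv, (mem_polyFace_convexHull_iff (subset_convexHull ℝ _ hv)).2 hmin⟩⟩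

lemma faceCentroid_mem_polyFace {s : Finset (Esp d)} (hs : s.Nonempty) (c : Esp d) :
    faceCentroid s c ∈ polyFace (convexHull ℝ (s : Set (Esp d))) c := by
  rw [polyFace_convexHull_eq]
  exact Finset.centerMass_mem_convexHull _ (fun _ _ => zero_le_one)
    (by simpa using faceVerts_nonempty hs c) fun v hv => hv

lemma polyFace_subset_of_faceCentroid_mem {s : Finset (Esp d)} {c c' : Esp d}
    (h : faceCentroid s c ∈ polyFace (convexHull ℝ (s : Set (Esp d))) c') :
    polyFace (convexHull ℝ (s : Set (Esp d))) c ⊆ polyFace (convexHull ℝ (s : Set (Esp d))) c' := by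
  rw [polyFace_convexHull_eq s c]
  refine convexHull_min (fun v hv => ?_) (convex_polyFace (convex_convexHull ℝ _) c')
  exact mem_polyFace_of_centerMass_mem (fun _ _ => zero_le_one)
    (fun v hv => subset_convexHull ℝ _ (mem_faceVerts.1 hv).1) h hv one_ne_zero

lemma finite_range_faceCentroid (s t : Finset (Esp d)) :
    (range fun c => (faceCentroid s c, faceCentroid t c)).Finite := by
  refine ((s.powerset ×ˢ t.powerset).finite_toSet.image fun VW =>
    (VW.1.centerMass (fun _ => (1 : ℝ)) id, VW.2.centerMass (fun _ => (1 : ℝ)) id)).subset ?_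
  rintro _ ⟨c, rfl⟩
  refine ⟨(faceVerts s c, faceVerts t c), ?_, rfl⟩
  simp only [Finset.coe_product, Finset.coe_powerset, mem_prod, mem_preimage, mem_powerset_iff,
    Finset.coe_subset]
  exact ⟨fun v hv => (mem_faceVerts.1 hv).1, fun v hv => (mem_faceVerts.1 hv).1⟩

lemma exists_inner_sub_le_mul_of_forall_mem_polyFace (s : Finset (Esp d)) {x y w : Esp d}
    (hx : x ∈ convexHull ℝ (s : Set (Esp d)))
    (h : ∀ c, x ∈ polyFace (convexHull ℝ (s : Set (Esp d))) c → ⟪c, y⟫ ≤ ⟪c, w⟫) :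
    ∃ M : ℝ, ∀ c, ∀ z ∈ polyFace (convexHull ℝ (s : Set (Esp d))) c,
      ⟪c, y - w⟫ ≤ M * ⟪c, x - z⟫ := by
  have hcone : w - y ∈ PointedCone.hull ℝ ((s.image (· - x) : Finset (Esp d)) : Set (Esp d)) := by
    refine PointedCone.mem_hull_of_forall_inner_nonneg fun c hc => ?_
    have hxc : x ∈ polyFace (convexHull ℝ (s : Set (Esp d))) c :=
      (mem_polyFace_convexHull_iff hx).2 fun v hv => by
        simpa [inner_sub_right] using hc _ (Finset.mem_image_of_mem _ hv)
    simpa [inner_sub_right] using h c hxc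
  obtain ⟨M, hM⟩ := PointedCone.exists_mul_le_inner_of_mem_hull hcone
  refine ⟨M, fun c z hz => ?_⟩
  have := hM c ⟪c, z - x⟫ (by
    simp only [Finset.mem_image, forall_exists_index, and_imp, forall_apply_eq_imp_iff₂,
      inner_sub_right, sub_le_sub_iff_right]
    exact fun v hv => hz.2 v (subset_convexHull ℝ _ hv))
  simp only [inner_sub_right] at this ⊢
  linarith

theorem eq_smul_add_of_mem_polyFace {P Q R : Set (Esp d)} (hP : Convex ℝ P) (hPc : IsClosed P)
    (hQ : Convex ℝ Q) (hQc : IsCompact Q) (hR : Convex ℝ R) (hRc : IsCompact R) {α : ℝ}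
    (hα : 0 ≤ α) {p q : Esp d → Esp d} (hp : ∀ c, p c ∈ polyFace P c)
    (hq : ∀ c, q c ∈ polyFace Q c) (hr : ∀ c, p c - α • q c ∈ polyFace R c) :
    P = α • Q + R := by
  refine Subset.antisymm (subset_of_forall_exists_inner_le ((hQ.smul α).add hR)
    ((hQc.smul α).add hRc).isClosed fun c x hx => ⟨p c, ?_, (hp c).2 x hx⟩)
    (subset_of_forall_exists_inner_le hP hPc ?_)
  · simpa using add_mem_add (smul_mem_smul_set (a := α) (hq c).1) (hr c).1
  · rintro c _ ⟨_, ⟨y, hy, rfl⟩, r, hr', rfl⟩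
    refine ⟨p c, (hp c).1, ?_⟩
    have h1 := mul_le_mul_of_nonneg_left ((hq c).2 y hy) hα
    have h2 := (hr c).2 r hr'
    rw [inner_sub_right, real_inner_smul_right] at h2
    rw [inner_add_right, real_inner_smul_right]
    linarith

end Faces

theorem stmt13 {d : ℕ} (P Q : Set (Esp d)) (hP : IsPolytope P) (hQ : IsPolytope Q)
    (h : ∀ c : Esp d,
      {c' : Esp d | polyFace P c ⊆ polyFace P c'} =
      {c' : Esp d | polyFace Q c ⊆ polyFace Q c'}) :
    ∃ α : ℝ, 0 < α ∧ ∃ R : Set (Esp d), IsPolytope R ∧ P = α • Q + R := by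
  obtain ⟨s, hs, rfl⟩ := hP
  obtain ⟨t, ht, rfl⟩ := hQ
  set p := faceCentroid s
  set q := faceCentroid t
  have hp := faceCentroid_mem_polyFace hs
  have hq := faceCentroid_mem_polyFace ht
  have hfan : ∀ c₀ c, p c₀ ∈ polyFace (convexHull ℝ ↑s) c →
      ∀ w ∈ convexHull ℝ (t : Set (Esp d)), ⟪c, q c₀⟫ ≤ ⟪c, w⟫ := fun c₀ c hc =>
    ((Set.ext_iff.1 (h c₀) c).1 (polyFace_subset_of_faceCentroid_mem hc) (hq c₀)).2
  obtain ⟨ε, hε, hεle⟩ := exists_pos_forall_mul_inner_le (finite_range_faceCentroid s t)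
    (fun c₀ c => (hp c).2 _ (hp c₀).1) fun c₀ c₁ => by
      obtain ⟨M, hM⟩ := exists_inner_sub_le_mul_of_forall_mem_polyFace s (hp c₀).1
        fun c hc => hfan c₀ c hc _ (hq c₁).1
      exact ⟨M, fun c => hM c _ (hp c)⟩
  set r := fun c => p c - ε • q c
  have hr : ∀ c, r c ∈ polyFace (convexHull ℝ (range r)) c := fun c =>
    (mem_polyFace_convexHull_iff (subset_convexHull ℝ _ (mem_range_self c))).2 <|
      forall_mem_range.2 fun c₀ => by
        have := hεle c₀ c
        simp only [r, inner_sub_right, real_inner_smul_right] at this ⊢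
        linarith
  have hrfin : (range r).Finite := by
    convert (finite_range_faceCentroid s t).image fun xy => xy.1 - ε • xy.2
    rw [← range_comp]; rfl
  have hR : IsPolytope (convexHull ℝ (range r)) :=
    ⟨hrfin.toFinset, hrfin.toFinset_nonempty.2 (range_nonempty r), by rw [hrfin.coe_toFinset]⟩
  exact ⟨ε, hε, _, hR, eq_smul_add_of_mem_polyFace (convex_convexHull ℝ _)
    (s.finite_toSet.isCompact_convexHull ℝ).isClosed (convex_convexHull ℝ _)
    (t.finite_toSet.isCompact_convexHull ℝ) (convex_convexHull ℝ _)
    (hrfin.isCompact_convexHull ℝ) hε.le hp hq hr⟩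
end
end

section
/- Let P and Q be polytopes in ℝ^d with f0(P) = f0(P + Q). Then for every nonempty face F of P there is a unique nonempty face G of Q such that F + G is a face of P + Q, and the map F ↦ F + G is a bijection from the set of nonempty faces of P onto the set of nonempty faces of P + Q. -/
open Pointwise
open scoped RealInnerProductSpace

noncomputable section

/-!
Every face of `P + Q` is `F_P(c) + F_Q(c)`, and a sum of faces `F_P(a) + F_Q(b)` that is a face
`F_{P+Q}(c)` of `P + Q` already has `F_P(a) = F_P(c)` and `F_Q(b) = F_Q(c)`. So everything reduces
to showing that `F_Q(c)` depends only on `F_P(c)`.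

A vertex `w` of `P + Q` splits uniquely as `w = u + v` with `u ∈ P`, `v ∈ Q`, and `u` is a
vertex of `P`. Conversely every vertex `u` of `P` arises: expose it as `F_P(c) = {u}` and take
any vertex of `F_{P+Q}(c) = u + F_Q(c)`. When `f0 P = f0 (P + Q)` this surjection between finite
sets of the same size is a bijection, so each vertex `u` of `P` has a unique partner `v ∈ Q` with
`u + v` a vertex of `P + Q`. Applying the same surjection to the pairs `(F_Q(c), F_P(c))` and
`(F_P(c), F_Q(c))` shows that every vertex of `F_Q(c)` is the partner of a vertex of `F_P(c)`,
and that this partner lies in `F_Q(c)`; hence `F_Q(c)` is the convex hull of the partners of the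
vertices of `F_P(c)`.
-/

section ExtremePoints

variable {E : Type*} [AddCommGroup E] [Module ℝ E] {A B : Set E} {u v u' v' : E}

theorem mem_extremePoints_of_add_mem_extremePoints (hw : u + v ∈ (A + B).extremePoints ℝ)
    (hu : u ∈ A) (hv : v ∈ B) : u ∈ A.extremePoints ℝ := by
  refine ⟨hu, fun x₁ hx₁ x₂ hx₂ hx => ?_⟩
  have hx' : v + u ∈ openSegment ℝ (v + x₁) (v + x₂) :=
    (mem_openSegment_translate ℝ v).2 hx
  simp only [add_comm v] at hx'
  exact add_right_cancel (hw.2 (Set.add_mem_add hx₁ hv) (Set.add_mem_add hx₂ hv) hx')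

theorem eq_and_eq_of_add_eq_of_mem_extremePoints (hw : u + v ∈ (A + B).extremePoints ℝ)
    (hu : u ∈ A) (hv : v ∈ B) (hu' : u' ∈ A) (hv' : v' ∈ B) (h : u' + v' = u + v) :
    u' = u ∧ v' = v := by
  -- `u + v` is the midpoint of `u + v'` and `u' + v`
  have hmid : u + v ∈ openSegment ℝ (u + v') (u' + v) := by
    refine ⟨1 / 2, 1 / 2, by norm_num, by norm_num, by norm_num, ?_⟩
    rw [← smul_add, show u + v' + (u' + v) = (u + v) + (u' + v') by abel, h, ← two_smul ℝ,
      smul_smul]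
    norm_num
  obtain ⟨h₁, h₂⟩ := mem_extremePoints.1 hw |>.2 _ (Set.add_mem_add hu hv') _
    (Set.add_mem_add hu' hv) hmid
  exact ⟨add_right_cancel h₂, add_left_cancel h₁⟩

end ExtremePoints

theorem convexHull_extremePoints_of_finite {E : Type*} [NormedAddCommGroup E] [NormedSpace ℝ E]
    {K : Set E} (hK : IsCompact K) (hKc : Convex ℝ K) (hfin : (K.extremePoints ℝ).Finite) :
    convexHull ℝ (K.extremePoints ℝ) = K := by
  rw [← (hfin.isCompact_convexHull ℝ).isClosed.closure_eq]
  exact closure_convexHull_extremePoints hK hKc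

theorem exists_inner_lt_of_notMem {E : Type*} [NormedAddCommGroup E] [InnerProductSpace ℝ E]
    [CompleteSpace E] {K : Set E} (hK : Convex ℝ K) (hKc : IsClosed K) {z : E} (hz : z ∉ K) :
    ∃ c : E, ∀ y ∈ K, ⟪c, z⟫ < ⟪c, y⟫ := by
  obtain ⟨f, a, hfz, hfK⟩ := geometric_hahn_banach_point_closed hK hKc hz
  refine ⟨(InnerProductSpace.toDual ℝ E).symm f, fun y hy => ?_⟩
  rw [InnerProductSpace.toDual_symm_apply, InnerProductSpace.toDual_symm_apply]
  exact hfz.trans (hfK y hy)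

section Faces

variable {d : ℕ} {P Q : Set (Esp d)}

theorem isExposed_polyFace (P : Set (Esp d)) (c : Esp d) : IsExposed ℝ P (polyFace P c) :=
  fun _ => ⟨-innerSL ℝ c, by ext x; simp [polyFace]⟩

theorem polyVerts_polyFace_subset (P : Set (Esp d)) (c : Esp d) :
    polyVerts (polyFace P c) ⊆ polyVerts P :=
  (isExposed_polyFace P c).isExtreme.extremePoints_subset_extremePoints

theorem polyFace_nonempty_of_isCompact (hP : IsCompact P) (hne : P.Nonempty) (c : Esp d) :
    (polyFace P c).Nonempty := by
  obtain ⟨x, hx, hmin⟩ := hP.exists_isMinOn hne (innerSL ℝ c).continuous.continuousOn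
  exact ⟨x, hx, fun y hy => hmin hy⟩

theorem polyFace_add (P Q : Set (Esp d)) (c : Esp d) :
    polyFace (P + Q) c = polyFace P c + polyFace Q c := by
  ext z
  constructor
  · rintro ⟨hz, hmin⟩
    obtain ⟨x, hx, y, hy, rfl⟩ := Set.mem_add.1 hz
    refine Set.add_mem_add ⟨hx, fun x' hx' => ?_⟩ ⟨hy, fun y' hy' => ?_⟩
    · have := hmin (x' + y) (Set.add_mem_add hx' hy)
      rw [inner_add_right, inner_add_right] at this; linarith
    · have := hmin (x + y') (Set.add_mem_add hx hy')
      rw [inner_add_right, inner_add_right] at this; linarith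
  · rintro ⟨x, hx, y, hy, rfl⟩
    refine ⟨Set.add_mem_add hx.1 hy.1, fun z' hz' => ?_⟩
    obtain ⟨x', hx', y', hy', rfl⟩ := Set.mem_add.1 hz'
    rw [inner_add_right, inner_add_right]
    exact add_le_add (hx.2 x' hx') (hy.2 y' hy')

theorem mem_polyFace_of_add_mem_polyFace {c x y : Esp d} (hx : x ∈ P) (hy : y ∈ Q)
    (h : x + y ∈ polyFace (P + Q) c) : x ∈ polyFace P c := by
  refine ⟨hx, fun x' hx' => ?_⟩
  have := h.2 (x' + y) (Set.add_mem_add hx' hy)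
  rw [inner_add_right, inner_add_right] at this
  linarith

theorem subset_polyFace_of_add_subset {X H : Set (Esp d)} {c : Esp d} (hX : X ⊆ P)
    (hH : IsCompact H) (hHne : H.Nonempty) (h : X + H ⊆ polyFace P c + H) :
    X ⊆ polyFace P c := by
  obtain ⟨y, hy, hmax⟩ := hH.exists_isMaxOn hHne (innerSL ℝ c).continuous.continuousOn
  intro x hx
  obtain ⟨x', hx', y', hy', hsum⟩ := Set.mem_add.1 (h (Set.add_mem_add hx hy))
  -- `y` maximises `⟪c, ·⟫` on `H`, so `x + y = x' + y'` forces `⟪c, x⟫ ≤ ⟪c, x'⟫`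
  have hc : ⟪c, x'⟫ + ⟪c, y'⟫ = ⟪c, x⟫ + ⟪c, y⟫ := by
    rw [← inner_add_right, hsum, inner_add_right]
  have hy'y : ⟪c, y'⟫ ≤ ⟪c, y⟫ := hmax hy'
  exact ⟨hX hx, fun z hz => by linarith [hx'.2 z hz]⟩

end Faces

namespace IsPolytope

variable {d : ℕ} {P Q : Set (Esp d)}

theorem isCompact (hP : IsPolytope P) : IsCompact P := by
  obtain ⟨s, -, rfl⟩ := hP
  exact s.finite_toSet.isCompact_convexHull ℝ

theorem convex (hP : IsPolytope P) : Convex ℝ P := by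
  obtain ⟨s, -, rfl⟩ := hP
  exact convex_convexHull ℝ _

theorem nonempty (hP : IsPolytope P) : P.Nonempty := by
  obtain ⟨s, hs, rfl⟩ := hP
  exact (Finset.coe_nonempty.2 hs).convexHull

theorem finite_polyVerts (hP : IsPolytope P) : (polyVerts P).Finite := by
  obtain ⟨s, -, rfl⟩ := hP
  exact s.finite_toSet.subset extremePoints_convexHull_subset

theorem polyVerts_nonempty (hP : IsPolytope P) : (polyVerts P).Nonempty :=
  hP.isCompact.extremePoints_nonempty hP.nonempty

theorem convexHull_polyVerts (hP : IsPolytope P) : convexHull ℝ (polyVerts P) = P :=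
  convexHull_extremePoints_of_finite hP.isCompact hP.convex hP.finite_polyVerts

theorem add (hP : IsPolytope P) (hQ : IsPolytope Q) : IsPolytope (P + Q) := by
  classical
  obtain ⟨s, hs, rfl⟩ := hP
  obtain ⟨t, ht, rfl⟩ := hQ
  exact ⟨s + t, hs.add ht, by rw [Finset.coe_add, convexHull_add]⟩

theorem polyFace (hP : IsPolytope P) (c : Esp d) : IsPolytope (polyFace P c) := by
  have hK := (isExposed_polyFace P c).isCompact hP.isCompact
  have hfin := hP.finite_polyVerts.subset (polyVerts_polyFace_subset P c)
  refine ⟨hfin.toFinset, ?_, ?_⟩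
  · exact hfin.toFinset_nonempty.2
      (hK.extremePoints_nonempty (polyFace_nonempty_of_isCompact hP.isCompact hP.nonempty c))
  · rw [hfin.coe_toFinset]
    exact (convexHull_extremePoints_of_finite hK
      ((isExposed_polyFace P c).convex hP.convex) hfin).symm

end IsPolytope

section Vertices

variable {d : ℕ} {P Q : Set (Esp d)}

theorem exists_polyFace_eq_singleton (hP : IsPolytope P) {u : Esp d} (hu : u ∈ polyVerts P) :
    ∃ c, polyFace P c = {u} := by
  have hu' : u ∉ convexHull ℝ (polyVerts P \ {u}) := fun h =>
    ((hP.convex.mem_extremePoints_iff_mem_sdiff_convexHull_sdiff.1 hu).2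
      (convexHull_mono (Set.sdiff_subset_sdiff_left extremePoints_subset) h))
  obtain ⟨c, hc⟩ := exists_inner_lt_of_notMem (convex_convexHull ℝ _)
    ((hP.finite_polyVerts.sdiff.isCompact_convexHull ℝ).isClosed) hu'
  refine ⟨c, ((hP.polyFace c).nonempty.subset_singleton_iff).1 ?_⟩
  have hverts : polyVerts (polyFace P c) ⊆ {u} := by
    intro v hv
    by_contra hvu
    have hvc := (extremePoints_subset hv).2 u (extremePoints_subset hu)
    exact (hc v (subset_convexHull ℝ _ ⟨polyVerts_polyFace_subset P c hv, hvu⟩)).not_ge hvc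
  rw [← (hP.polyFace c).convexHull_polyVerts, ← convexHull_singleton (𝕜 := ℝ) u]
  exact convexHull_mono hverts

theorem exists_add_mem_polyVerts_add (hP : IsPolytope P) (hQ : IsPolytope Q) {u : Esp d}
    (hu : u ∈ polyVerts P) : ∃ v ∈ Q, u + v ∈ polyVerts (P + Q) := by
  obtain ⟨c, hc⟩ := exists_polyFace_eq_singleton hP hu
  obtain ⟨w, hw⟩ := ((hP.add hQ).polyFace c).polyVerts_nonempty
  have hw' := polyVerts_polyFace_subset _ c hw
  rw [polyFace_add, hc, Set.singleton_add] at hw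
  obtain ⟨v, hv, rfl⟩ := extremePoints_subset hw
  exact ⟨v, hv.1, hw'⟩

end Vertices

section MinkowskiSum

variable {d : ℕ} {P Q : Set (Esp d)}

theorem polyFace_eq_of_add_eq (hP : IsPolytope P) (hQ : IsPolytope Q) {a b c : Esp d}
    (hsum : polyFace P a + polyFace Q b = polyFace (P + Q) c) :
    polyFace P a = polyFace P c ∧ polyFace Q b = polyFace Q c := by
  obtain ⟨x, hx⟩ := (hP.polyFace a).nonempty
  obtain ⟨y, hy⟩ := (hQ.polyFace b).nonempty
  have hPsub : polyFace P a ⊆ polyFace P c := fun x' hx' =>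
    mem_polyFace_of_add_mem_polyFace hx'.1 hy.1 (hsum ▸ Set.add_mem_add hx' hy)
  have hQsub : polyFace Q b ⊆ polyFace Q c := fun y' hy' => by
    rw [add_comm (polyFace P a), add_comm P] at hsum
    exact mem_polyFace_of_add_mem_polyFace hy'.1 hx.1 (hsum ▸ Set.add_mem_add hy' hx)
  rw [polyFace_add] at hsum
  refine ⟨hPsub.antisymm ?_, hQsub.antisymm ?_⟩
  · refine subset_polyFace_of_add_subset (isExposed_polyFace P c).subset
      (hQ.polyFace b).isCompact ⟨y, hy⟩ ?_
    exact hsum ▸ Set.add_subset_add_left hQsub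
  · refine subset_polyFace_of_add_subset (isExposed_polyFace Q c).subset
      (hP.polyFace a).isCompact ⟨x, hx⟩ ?_
    rw [add_comm, add_comm (polyFace Q b)]
    exact hsum ▸ Set.add_subset_add_right hPsub

theorem eq_of_add_mem_polyVerts_add (hP : IsPolytope P) (hQ : IsPolytope Q)
    (h : f0 P = f0 (P + Q)) {u v v' : Esp d} (hu : u ∈ P) (hv : v ∈ Q) (hv' : v' ∈ Q)
    (hw : u + v ∈ polyVerts (P + Q)) (hw' : u + v' ∈ polyVerts (P + Q)) : v = v' := by
  have hsplit : ∀ w ∈ polyVerts (P + Q), ∃ a ∈ P, ∃ b ∈ Q, a + b = w :=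
    fun w hw => Set.mem_add.1 (extremePoints_subset hw)
  choose fst hfst snd hsnd hfst_add using hsplit
  have fst_add : ∀ {a b} (ha : a ∈ P) (hb : b ∈ Q) (hab : a + b ∈ polyVerts (P + Q)),
      fst (a + b) hab = a := fun ha hb hab =>
    (eq_and_eq_of_add_eq_of_mem_extremePoints hab ha hb (hfst _ hab) (hsnd _ hab)
      (hfst_add _ hab)).1
  have hfst_mem : ∀ w hw, fst w hw ∈ polyVerts P := fun w hw =>
    mem_extremePoints_of_add_mem_extremePoints (by rwa [hfst_add w hw]) (hfst w hw) (hsnd w hw)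
  have hfst_surj : ∀ u ∈ polyVerts P, ∃ w hw, fst w hw = u := fun u hu => by
    obtain ⟨v, hv, huv⟩ := exists_add_mem_polyVerts_add hP hQ hu
    exact ⟨u + v, huv, fst_add (extremePoints_subset hu) hv huv⟩
  have := Set.inj_on_of_surj_on_of_ncard_le fst hfst_mem hfst_surj h.ge hw hw'
    (by rw [fst_add hu hv hw, fst_add hu hv' hw']) (hP.add hQ).finite_polyVerts
  exact add_left_cancel this

theorem polyFace_subset_of_polyFace_eq (hP : IsPolytope P) (hQ : IsPolytope Q)
    (h : f0 P = f0 (P + Q)) {c c' : Esp d} (hcc : polyFace P c = polyFace P c') :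
    polyFace Q c ⊆ polyFace Q c' := by
  rw [← (hQ.polyFace c).convexHull_polyVerts]
  refine convexHull_min (fun v hv => ?_) ((isExposed_polyFace Q c').convex hQ.convex)
  obtain ⟨u, hu, huv⟩ := exists_add_mem_polyVerts_add (hQ.polyFace c) (hP.polyFace c) hv
  rw [add_comm v, add_comm (polyFace Q c), ← polyFace_add] at huv
  have huv := polyVerts_polyFace_subset _ c huv
  rw [hcc] at hu
  have hu' : u ∈ polyVerts (polyFace P c') := by
    rw [polyVerts, (isExposed_polyFace P c').isExtreme.extremePoints_eq]
    exact ⟨hu, mem_extremePoints_of_add_mem_extremePoints huv hu.1 (extremePoints_subset hv).1⟩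
  obtain ⟨v', hv', huv'⟩ := exists_add_mem_polyVerts_add (hP.polyFace c') (hQ.polyFace c') hu'
  rw [← polyFace_add] at huv'
  have huv' := polyVerts_polyFace_subset _ c' huv'
  rwa [eq_of_add_mem_polyVerts_add hP hQ h hu.1 (extremePoints_subset hv).1 hv'.1 huv huv']

theorem isFace_add_iff (hP : IsPolytope P) (hQ : IsPolytope Q) (h : f0 P = f0 (P + Q))
    {a : Esp d} {G : Set (Esp d)} (hG : IsFace Q G) :
    IsFace (P + Q) (polyFace P a + G) ↔ G = polyFace Q a := by
  refine ⟨fun ⟨c, hc⟩ => ?_, fun hGa => ⟨a, by rw [polyFace_add, hGa]⟩⟩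
  obtain ⟨b, rfl⟩ := hG
  obtain ⟨hPac, hQbc⟩ := polyFace_eq_of_add_eq hP hQ hc.symm
  rw [hQbc]
  exact (polyFace_subset_of_polyFace_eq hP hQ h hPac.symm).antisymm
    (polyFace_subset_of_polyFace_eq hP hQ h hPac)

end MinkowskiSum

theorem stmt14 {d : ℕ} (P Q : Set (Esp d)) (hP : IsPolytope P) (hQ : IsPolytope Q)
    (h : f0 P = f0 (P + Q)) :
    (∀ F : Set (Esp d), IsFace P F → F.Nonempty →
      ∃! G : Set (Esp d), IsFace Q G ∧ G.Nonempty ∧ IsFace (P + Q) (F + G)) ∧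
    ∃ ψ : Set (Esp d) → Set (Esp d),
      (∀ F : Set (Esp d), IsFace P F → F.Nonempty →
        IsFace Q (ψ F) ∧ (ψ F).Nonempty ∧ IsFace (P + Q) (F + ψ F)) ∧
      Set.BijOn (fun F => F + ψ F)
        {F : Set (Esp d) | IsFace P F ∧ F.Nonempty}
        {X : Set (Esp d) | IsFace (P + Q) X ∧ X.Nonempty} := by
  have hunique : ∀ F : Set (Esp d), IsFace P F → F.Nonempty →
      ∃! G : Set (Esp d), IsFace Q G ∧ G.Nonempty ∧ IsFace (P + Q) (F + G) := by
    rintro F ⟨a, rfl⟩ -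
    exact ⟨polyFace Q a, ⟨⟨a, rfl⟩, (hQ.polyFace a).nonempty, ⟨a, polyFace_add P Q a⟩⟩,
      fun G ⟨hG, _, hFG⟩ => (isFace_add_iff hP hQ h hG).1 hFG⟩
  choose! ψ hψ using fun F hF hne => (hunique F hF hne).exists
  have hψ_eq : ∀ a, ψ (polyFace P a) = polyFace Q a := fun a =>
    have hψa := hψ _ ⟨a, rfl⟩ (hP.polyFace a).nonempty
    (isFace_add_iff hP hQ h hψa.1).1 hψa.2.2
  refine ⟨hunique, ψ, hψ,
    fun F ⟨hF, hne⟩ => ⟨(hψ F hF hne).2.2, hne.add (hψ F hF hne).2.1⟩, ?_, ?_⟩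
  · rintro _ ⟨⟨a₁, rfl⟩, -⟩ _ ⟨⟨a₂, rfl⟩, -⟩ heq
    simp only [hψ_eq] at heq
    exact (polyFace_eq_of_add_eq hP hQ (heq.trans (polyFace_add P Q a₂).symm)).1
  · rintro _ ⟨⟨c, rfl⟩, -⟩
    exact ⟨polyFace P c, ⟨⟨c, rfl⟩, (hP.polyFace c).nonempty⟩,
      by simp only [hψ_eq, polyFace_add]⟩
end
end
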